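/- Fix weights $F_1, \ldots, F_S > 0$ and values $\overline{U}_1, \ldots, \overline{U}_S \in [0,1]$. The maximizer over non-decreasing vectors $0 \le h_1 \le \cdots \le h_S \le 1$ of the log-likelihood $\ell(h) = \sum_{s=1}^S \big[ F_s \overline{U}_s \log h_s + F_s (1 - \overline{U}_s) \log(1 - h_s) \big]$ coincides with the minimizer over the same constraint set of the weighted least squares criterion $\sum_{s=1}^S F_s (\overline{U}_s - h_s)^2$. -/

import Mathlib

/-!
The least squares isotonic regression `c` exists by compactness. Its first-order optimality
conditions, along directions that keep the ties of `c` and point into the cube at its faces,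
give `c s = 0 → U s = 0`, `c s = 1 → U s = 1` and `∑ F (U - c) / (c (1 - c)) (h - c) ≤ 0`
for every admissible `h`. Bounding both logarithms of each term of `ℓ` by their tangents at `c`,
strictly away from `c`, gives `ℓ h ≤ ℓ c + ∑ F (U - c) / (c (1 - c)) (h - c) ≤ ℓ c`, with
strict inequality for `h ≠ c`. So `c` is the unique maximizer of `ℓ`, which gives both directions.
-/

open Finset

/-- Extended-real logarithm with the convention `log 0 = -∞` (for arguments `≤ 0`). -/
noncomputable def elog (x : ℝ) : EReal := if x ≤ 0 then ⊥ else ((Real.log x : ℝ) : EReal)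

/-- The Bernoulli log-likelihood `ℓ(h) = ∑ₛ Fₛ Uₛ log hₛ + Fₛ (1-Uₛ) log(1-hₛ)`, valued in
the extended reals with the conventions `0 · log 0 = 0` and `log 0 = -∞` (note that
`EReal` multiplication satisfies `0 * ⊥ = 0`). -/
noncomputable def bernLogLik {S : ℕ} (F U h : Fin S → ℝ) : EReal :=
  ∑ s, (((F s * U s : ℝ) : EReal) * elog (h s)
        + ((F s * (1 - U s) : ℝ) : EReal) * elog (1 - h s))

open Filter Topology Real

def monotoneUnitCube (ι : Type*) [Preorder ι] : Set (ι → ℝ) :=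
  {h | Monotone h ∧ ∀ i, h i ∈ Set.Icc 0 1}

def weightedSSE {ι : Type*} [Fintype ι] (w y h : ι → ℝ) : ℝ :=
  ∑ i, w i * (y i - h i) ^ 2

section LeastSquares

variable {ι : Type*}

theorem isCompact_monotoneUnitCube [Preorder ι] : IsCompact (monotoneUnitCube ι) := by
  refine (isCompact_univ_pi fun _ => isCompact_Icc).of_isClosed_subset ?_ fun h hh =>
    Set.mem_univ_pi.2 hh.2
  have hbox : IsClosed {h : ι → ℝ | ∀ i, h i ∈ Set.Icc 0 1} := by
    simp only [Set.ofPred_forall]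
    exact isClosed_iInter fun i => isClosed_Icc.preimage (continuous_apply i)
  exact isClosed_monotone.inter hbox

theorem exists_isMinOn_weightedSSE [Fintype ι] [Preorder ι] (w y : ι → ℝ) :
    ∃ c ∈ monotoneUnitCube ι, IsMinOn (weightedSSE w y) (monotoneUnitCube ι) c :=
  isCompact_monotoneUnitCube.exists_isMinOn ⟨0, monotone_const, fun _ => by simp⟩
    (by unfold weightedSSE; fun_prop)

theorem eventually_add_mul_le_add_mul {p q a b : ℝ} (hpq : p ≤ q) (hab : p = q → a ≤ b) :
    ∀ᶠ ε in 𝓝[>] (0 : ℝ), p + ε * a ≤ q + ε * b := by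
  rcases hpq.eq_or_lt with rfl | hlt
  · filter_upwards [self_mem_nhdsWithin] with ε (hε : 0 < ε)
    gcongr
    exact hab rfl
  · refine eventually_nhdsWithin_of_eventually_nhds ?_
    have hf : Continuous fun ε : ℝ => p + ε * a := by fun_prop
    have hg : Continuous fun ε : ℝ => q + ε * b := by fun_prop
    exact (hf.continuousAt.eventually_lt hg.continuousAt (by simpa using hlt)).mono
      fun _ => le_of_lt

theorem eventually_add_smul_mem_monotoneUnitCube [Preorder ι] [Finite ι] {c d : ι → ℝ}
    (hc : c ∈ monotoneUnitCube ι) (hties : ∀ i j, i ≤ j → c i = c j → d i ≤ d j)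
    (hd0 : ∀ i, c i = 0 → 0 ≤ d i) (hd1 : ∀ i, c i = 1 → d i ≤ 0) :
    ∀ᶠ ε in 𝓝[>] (0 : ℝ), c + ε • d ∈ monotoneUnitCube ι := by
  have hmono : ∀ᶠ ε in 𝓝[>] (0 : ℝ), ∀ i j, i ≤ j → c i + ε * d i ≤ c j + ε * d j := by
    refine eventually_all.2 fun i => eventually_all.2 fun j => ?_
    by_cases hij : i ≤ j
    · filter_upwards [eventually_add_mul_le_add_mul (hc.1 hij) (hties i j hij)] with ε hε
      exact fun _ => hε
    · exact Eventually.of_forall fun _ hij' => absurd hij' hij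
  have hlow : ∀ᶠ ε in 𝓝[>] (0 : ℝ), ∀ i, 0 + ε * 0 ≤ c i + ε * d i :=
    eventually_all.2 fun i => eventually_add_mul_le_add_mul (hc.2 i).1 fun h => hd0 i h.symm
  have hup : ∀ᶠ ε in 𝓝[>] (0 : ℝ), ∀ i, c i + ε * d i ≤ 1 + ε * 0 :=
    eventually_all.2 fun i => eventually_add_mul_le_add_mul (hc.2 i).2 (hd1 i)
  filter_upwards [hmono, hlow, hup] with ε hmono hlow hup
  exact ⟨fun i j hij => hmono i j hij, fun i => ⟨by simpa using hlow i, by simpa using hup i⟩⟩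

theorem weightedSSE_add_smul [Fintype ι] (w y c d : ι → ℝ) (ε : ℝ) :
    weightedSSE w y (c + ε • d) = weightedSSE w y c
      + ε * (ε * ∑ i, w i * d i ^ 2 - 2 * ∑ i, w i * (y i - c i) * d i) := by
  simp only [weightedSSE, Pi.add_apply, Pi.smul_apply, smul_eq_mul, mul_sub, mul_sum,
    ← sum_sub_distrib, ← sum_add_distrib]
  exact sum_congr rfl fun i _ => by ring

theorem sum_mul_sub_mul_nonpos_of_isMinOn [Fintype ι] {w y c d : ι → ℝ} {K : Set (ι → ℝ)}
    (hmin : IsMinOn (weightedSSE w y) K c) (hd : ∀ᶠ ε in 𝓝[>] (0 : ℝ), c + ε • d ∈ K) :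
    ∑ i, w i * (y i - c i) * d i ≤ 0 := by
  set A := ∑ i, w i * (y i - c i) * d i
  set B := ∑ i, w i * d i ^ 2
  have hev : ∀ᶠ ε in 𝓝[>] (0 : ℝ), 0 ≤ ε * B - 2 * A := by
    filter_upwards [hd, self_mem_nhdsWithin] with ε hε (hε0 : 0 < ε)
    have : weightedSSE w y c ≤ weightedSSE w y (c + ε • d) := hmin hε
    rw [weightedSSE_add_smul] at this
    exact (mul_nonneg_iff_of_pos_left hε0).1 (by linarith)
  have hlim : Tendsto (fun ε => ε * B - 2 * A) (𝓝[>] (0 : ℝ)) (𝓝 (0 * B - 2 * A)) :=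
    ((continuous_id.mul continuous_const).sub continuous_const).tendsto' 0 _ rfl
      |>.mono_left nhdsWithin_le_nhds
  linarith [ge_of_tendsto hlim hev]

variable [Fintype ι] [Preorder ι] {w y c : ι → ℝ}

theorem eq_zero_of_isMinOn_weightedSSE (hw : ∀ i, 0 < w i) (hy : ∀ i, 0 ≤ y i)
    (hc : c ∈ monotoneUnitCube ι) (hmin : IsMinOn (weightedSSE w y) (monotoneUnitCube ι) c)
    {i : ι} (hi : c i = 0) : y i = 0 := by
  classical
  set d : ι → ℝ := fun j => if c j = 0 then 1 else 0
  have hfo := sum_mul_sub_mul_nonpos_of_isMinOn (d := d) hmin <|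
    eventually_add_smul_mem_monotoneUnitCube hc (fun j k _ h => by simp [d, h])
      (fun j h => by simp [d, h]) (fun j h => by simp [d, h])
  have hterm : ∀ j ∈ univ, 0 ≤ w j * (y j - c j) * d j := fun j _ => by
    by_cases h : c j = 0
    · simpa [d, h] using mul_nonneg (hw j).le (hy j)
    · simp [d, h]
  have := (sum_eq_zero_iff_of_nonneg hterm).1 (hfo.antisymm (sum_nonneg hterm)) i (mem_univ i)
  simpa [d, hi, (hw i).ne'] using this

theorem eq_one_of_isMinOn_weightedSSE (hw : ∀ i, 0 < w i) (hy : ∀ i, y i ≤ 1)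
    (hc : c ∈ monotoneUnitCube ι) (hmin : IsMinOn (weightedSSE w y) (monotoneUnitCube ι) c)
    {i : ι} (hi : c i = 1) : y i = 1 := by
  classical
  set d : ι → ℝ := fun j => if c j = 1 then -1 else 0
  have hfo := sum_mul_sub_mul_nonpos_of_isMinOn (d := d) hmin <|
    eventually_add_smul_mem_monotoneUnitCube hc (fun j k _ h => by simp [d, h])
      (fun j h => by simp [d, h]) (fun j h => by simp [d, h])
  have hterm : ∀ j ∈ univ, 0 ≤ w j * (y j - c j) * d j := fun j _ => by
    by_cases h : c j = 1
    · simpa [d, h] using mul_nonpos_of_nonneg_of_nonpos (hw j).le (sub_nonpos.2 (hy j))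
    · simp [d, h]
  have := (sum_eq_zero_iff_of_nonneg hterm).1 (hfo.antisymm (sum_nonneg hterm)) i (mem_univ i)
  simpa [d, hi, (hw i).ne', sub_eq_zero] using this

/-- The variational inequality behind the likelihood bound: the weights `(c i * (1 - c i))⁻¹`
are constant on the ties of `c` and vanish (as junk values) on the faces. -/
theorem sum_div_mul_sub_nonpos_of_isMinOn (hc : c ∈ monotoneUnitCube ι)
    (hmin : IsMinOn (weightedSSE w y) (monotoneUnitCube ι) c) {h : ι → ℝ}
    (hh : h ∈ monotoneUnitCube ι) :
    ∑ i, w i * (y i - c i) / (c i * (1 - c i)) * (h i - c i) ≤ 0 := by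
  set d : ι → ℝ := fun i => (c i * (1 - c i))⁻¹ * (h i - c i)
  have hties : ∀ i j, i ≤ j → c i = c j → d i ≤ d j := fun i j hij hcij => by
    simp only [d, hcij]
    have := hh.1 hij
    have := hc.2 j
    exact mul_le_mul_of_nonneg_left (by linarith)
      (inv_nonneg.2 (mul_nonneg this.1 (sub_nonneg.2 this.2)))
  have hfo := sum_mul_sub_mul_nonpos_of_isMinOn (d := d) hmin <|
    eventually_add_smul_mem_monotoneUnitCube hc hties (fun i h => by simp [d, h])
      (fun i h => by simp [d, h])
  convert hfo using 2 with i
  simp only [d]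
  ring

end LeastSquares

namespace EReal

theorem coe_finset_sum {ι : Type*} (s : Finset ι) (f : ι → ℝ) :
    ((∑ i ∈ s, f i : ℝ) : EReal) = ∑ i ∈ s, (f i : EReal) :=
  map_sum (⟨⟨Real.toEReal, coe_zero⟩, coe_add⟩ : ℝ →+ EReal) f s

theorem add_lt_coe_add_of_lt_of_le {x z : EReal} {y w : ℝ} (h : x < y) (h' : z ≤ w) :
    x + z < ((y + w : ℝ) : EReal) := by
  rw [coe_add]
  exact add_lt_add_of_lt_of_le' h h' (coe_ne_bot w) fun hw => absurd hw (coe_ne_top w)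

theorem sum_lt_coe_sum {ι : Type*} [Fintype ι] {f : ι → EReal} {g : ι → ℝ}
    (hle : ∀ i, f i ≤ g i) {i : ι} (hi : f i < g i) : ∑ j, f j < ((∑ j, g j : ℝ) : EReal) := by
  classical
  rw [← add_sum_erase univ f (mem_univ i), ← add_sum_erase univ g (mem_univ i)]
  refine add_lt_coe_add_of_lt_of_le hi ?_
  rw [coe_finset_sum]
  exact sum_le_sum fun j _ => hle j

end EReal

section Likelihood

variable {a c x : ℝ}

theorem elog_of_pos (hx : 0 < x) : elog x = (log x : EReal) := if_neg hx.not_ge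

theorem elog_of_nonpos (hx : x ≤ 0) : elog x = ⊥ := if_pos hx

theorem coe_mul_elog (hx : a ≠ 0 → 0 < x) : (a : EReal) * elog x = ((a * log x : ℝ) : EReal) := by
  rcases eq_or_ne a 0 with rfl | ha
  · simp
  · rw [elog_of_pos (hx ha), EReal.coe_mul]

theorem coe_mul_elog_lt_zero (ha : 0 < a) (hx : x < 1) : (a : EReal) * elog x < 0 := by
  rcases le_or_gt x 0 with hx0 | hx0
  · rw [elog_of_nonpos hx0, EReal.coe_mul_bot_of_pos ha]
    exact EReal.bot_lt_zero
  · rw [elog_of_pos hx0, ← EReal.coe_mul, ← EReal.coe_zero, EReal.coe_lt_coe_iff]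
    exact mul_neg_of_pos_of_neg ha (log_neg hx0 hx)

theorem coe_mul_elog_lt_tangent (ha : 0 < a) (hc : 0 < c) (hxc : x ≠ c) :
    (a : EReal) * elog x < ((a * (log c + (x - c) / c) : ℝ) : EReal) := by
  rcases le_or_gt x 0 with hx0 | hx0
  · rw [elog_of_nonpos hx0, EReal.coe_mul_bot_of_pos ha]
    exact EReal.bot_lt_coe _
  · rw [elog_of_pos hx0, ← EReal.coe_mul, EReal.coe_lt_coe_iff]
    have := log_lt_sub_one_of_pos (div_pos hx0 hc) (by rwa [ne_eq, div_eq_one_iff_eq hc.ne'])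
    rw [log_div hx0.ne' hc.ne', ← div_self hc.ne', ← sub_div] at this
    exact mul_lt_mul_of_pos_left (by linarith) ha

theorem coe_mul_elog_le_tangent (ha : 0 ≤ a) (hc : 0 < c) (x : ℝ) :
    (a : EReal) * elog x ≤ ((a * (log c + (x - c) / c) : ℝ) : EReal) := by
  rcases ha.eq_or_lt with rfl | ha
  · simp
  rcases eq_or_ne x c with rfl | hxc
  · simp [coe_mul_elog fun _ => hc]
  · exact (coe_mul_elog_lt_tangent ha hc hxc).le

noncomputable def bernTerm (f u x : ℝ) : EReal :=
  ((f * u : ℝ) : EReal) * elog x + ((f * (1 - u) : ℝ) : EReal) * elog (1 - x)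

theorem bernLogLik_eq_sum_bernTerm {S : ℕ} (F U h : Fin S → ℝ) :
    bernLogLik F U h = ∑ s, bernTerm (F s) (U s) (h s) := rfl

variable {f u : ℝ}

theorem bernTerm_eq (hc : c ∈ Set.Icc 0 1) (hc0 : c = 0 → u = 0) (hc1 : c = 1 → u = 1) :
    bernTerm f u c = ((f * u * log c + f * (1 - u) * log (1 - c) : ℝ) : EReal) := by
  rw [bernTerm, EReal.coe_add, coe_mul_elog, coe_mul_elog]
  · refine fun hfu => sub_pos.2 (hc.2.lt_of_ne fun h => hfu ?_)
    simp [hc1 h]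
  · refine fun hfu => hc.1.lt_of_ne fun h => hfu ?_
    simp [hc0 h.symm]

/-- On the faces `c = 0`, `c = 1` the slope is a junk `0 / 0 = 0`. -/
theorem bernTerm_lt_tangent (hf : 0 < f) (hu : u ∈ Set.Icc 0 1) (hc : c ∈ Set.Icc 0 1)
    (hc0 : c = 0 → u = 0) (hc1 : c = 1 → u = 1) (hx : x ∈ Set.Icc 0 1) (hxc : x ≠ c) :
    bernTerm f u x <
      ((f * u * log c + f * (1 - u) * log (1 - c) + f * (u - c) / (c * (1 - c)) * (x - c) : ℝ)
        : EReal) := by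
  rcases hc.1.eq_or_lt with rfl | hc0'
  · simpa [bernTerm, hc0 rfl] using coe_mul_elog_lt_zero hf (x := 1 - x)
      (by linarith [hx.1.lt_of_ne hxc.symm])
  rcases hc.2.eq_or_lt with rfl | hc1'
  · simpa [bernTerm, hc1 rfl] using coe_mul_elog_lt_zero hf (hx.2.lt_of_ne hxc)
  have hfu := mul_nonneg hf.le hu.1
  have hfu' := mul_nonneg hf.le (sub_nonneg.2 hu.2)
  have h1c : 0 < 1 - c := sub_pos.2 hc1'
  calc bernTerm f u x
      < ((f * u * (log c + (x - c) / c)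
          + f * (1 - u) * (log (1 - c) + ((1 - x) - (1 - c)) / (1 - c)) : ℝ) : EReal) := by
        rcases hu.1.eq_or_lt with rfl | hu0
        · rw [bernTerm, add_comm, add_comm (f * 0 * _)]
          exact EReal.add_lt_coe_add_of_lt_of_le
            (coe_mul_elog_lt_tangent (by simpa using hf) h1c (by contrapose! hxc; linarith))
            (coe_mul_elog_le_tangent hfu hc0' x)
        · exact EReal.add_lt_coe_add_of_lt_of_le
            (coe_mul_elog_lt_tangent (mul_pos hf hu0) hc0' hxc)
            (coe_mul_elog_le_tangent hfu' h1c (1 - x))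
    _ = _ := by
        congr 1
        field_simp
        ring

end Likelihood

section IsotonicRegression

variable {S : ℕ} {F U c : Fin S → ℝ}

theorem bernLogLik_lt_of_isMinOn_weightedSSE (hF : ∀ s, 0 < F s)
    (hU : ∀ s, U s ∈ Set.Icc (0 : ℝ) 1) (hc : c ∈ monotoneUnitCube (Fin S))
    (hmin : IsMinOn (weightedSSE F U) (monotoneUnitCube (Fin S)) c) {h : Fin S → ℝ}
    (hh : h ∈ monotoneUnitCube (Fin S)) (hne : h ≠ c) :
    bernLogLik F U h < bernLogLik F U c := by
  have hc0 : ∀ s, c s = 0 → U s = 0 := fun s =>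
    eq_zero_of_isMinOn_weightedSSE hF (fun s => (hU s).1) hc hmin
  have hc1 : ∀ s, c s = 1 → U s = 1 := fun s =>
    eq_one_of_isMinOn_weightedSSE hF (fun s => (hU s).2) hc hmin
  set R : Fin S → ℝ := fun s => F s * U s * log (c s) + F s * (1 - U s) * log (1 - c s)
  set L : Fin S → ℝ := fun s => F s * (U s - c s) / (c s * (1 - c s)) * (h s - c s)
  have hlt : ∀ s, h s ≠ c s → bernTerm (F s) (U s) (h s) < ((R s + L s : ℝ) : EReal) :=
    fun s => bernTerm_lt_tangent (hF s) (hU s) (hc.2 s) (hc0 s) (hc1 s) (hh.2 s)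
  have hle : ∀ s, bernTerm (F s) (U s) (h s) ≤ ((R s + L s : ℝ) : EReal) := fun s => by
    by_cases hs : h s = c s
    · simp [bernTerm_eq (hc.2 s) (hc0 s) (hc1 s), hs, R, L]
    · exact (hlt s hs).le
  obtain ⟨s, hs⟩ := Function.ne_iff.1 hne
  rw [bernLogLik_eq_sum_bernTerm, bernLogLik_eq_sum_bernTerm]
  calc ∑ s, bernTerm (F s) (U s) (h s) < ((∑ s, (R s + L s) : ℝ) : EReal) :=
        EReal.sum_lt_coe_sum hle (hlt s hs)
    _ ≤ ((∑ s, R s : ℝ) : EReal) := by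
        rw [sum_add_distrib, EReal.coe_le_coe_iff]
        exact add_le_of_nonpos_right (sum_div_mul_sub_nonpos_of_isMinOn hc hmin hh)
    _ = ∑ s, bernTerm (F s) (U s) (c s) := by
        rw [EReal.coe_finset_sum]
        exact sum_congr rfl fun s _ => (bernTerm_eq (hc.2 s) (hc0 s) (hc1 s)).symm

theorem bernLogLik_le_of_isMinOn_weightedSSE (hF : ∀ s, 0 < F s)
    (hU : ∀ s, U s ∈ Set.Icc (0 : ℝ) 1) (hc : c ∈ monotoneUnitCube (Fin S))
    (hmin : IsMinOn (weightedSSE F U) (monotoneUnitCube (Fin S)) c) {h : Fin S → ℝ}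
    (hh : h ∈ monotoneUnitCube (Fin S)) : bernLogLik F U h ≤ bernLogLik F U c := by
  rcases eq_or_ne h c with rfl | hne
  · exact le_rfl
  · exact (bernLogLik_lt_of_isMinOn_weightedSSE hF hU hc hmin hh hne).le

end IsotonicRegression

/-- over the monotone cone `0 ≤ h₁ ≤ ⋯ ≤ h_S ≤ 1`, maximizing the Bernoulli
log-likelihood is the same as minimizing the weighted least squares criterion
`∑ₛ Fₛ (Ūₛ - hₛ)²`. -/
theorem stmt6 {S : ℕ} (F U : Fin S → ℝ)
    (hF : ∀ s, 0 < F s) (hU : ∀ s, U s ∈ Set.Icc (0 : ℝ) 1)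
    (K : (Fin S → ℝ) → Prop)
    (hK : ∀ h, K h ↔ (Monotone h ∧ ∀ s, h s ∈ Set.Icc (0 : ℝ) 1)) :
    ∀ hstar : Fin S → ℝ, K hstar →
      ((∀ h, K h → bernLogLik F U h ≤ bernLogLik F U hstar) ↔
        (∀ h, K h → ∑ s, F s * (U s - hstar s) ^ 2 ≤ ∑ s, F s * (U s - h s) ^ 2)) := by
  have hK' : ∀ h, K h ↔ h ∈ monotoneUnitCube (Fin S) := hK
  intro hstar hstarK
  constructor
  · intro hmax h hh
    obtain ⟨c, hc, hmin⟩ := exists_isMinOn_weightedSSE F U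
    obtain rfl : hstar = c := by
      by_contra hne
      exact (bernLogLik_lt_of_isMinOn_weightedSSE hF hU hc hmin ((hK' _).1 hstarK) hne).not_ge
        (hmax c ((hK' c).2 hc))
    exact hmin ((hK' h).1 hh)
  · intro hmin h hh
    exact bernLogLik_le_of_isMinOn_weightedSSE hF hU ((hK' _).1 hstarK)
      (isMinOn_iff.2 fun h' hh' => hmin h' ((hK' h').2 hh')) ((hK' h).1 hh)
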